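/- arXiv:1407.4784 — 4 statements merged into one kernel-verified Lean document; each statement's English description precedes it below -/
import Mathlib

section
/- Let n ≥ 1 and k = 2n − 1. For any family of sets S_{ij} ⊆ ℕ with |S_{ij}| = k (i = 1,…,k, j ∈ ℕ), there exist a_{ij} ∈ S_{ij} satisfying conditions (2a), (2b), and (3) of the grid-filling problem. -/
/-!
Index the rows by `Fin (2n-1)` and let row `r'` beat row `r` when `r - r' ∈ {1, …, n-1}`
(mod `2n-1`); any two distinct rows are comparable and every row is beaten by at most `n-1`
rows. Choose pairwise distinct first entries `b r ∈ S r 1` (Hall), and fill row `r` greedily,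
never using the first entry of a row that beats `r`. At each position at most `n-1` of these
tokens and at most `n-1` earlier entries of the row are forbidden, so one of the `2n-1`
candidates is left. If `r` beats `r'`, then `b r` lies in every prefix of row `r` but nowhere
in row `r'`.
-/

open Finset

theorem exists_seq_of_forall_exists_next {α : Type*} (P : (n : ℕ) → (Fin n → α) → α → Prop)
    (h : ∀ n p, ∃ x, P n p x) : ∃ a : ℕ → α, ∀ n, P n (fun i => a i) (a n) := by
  choose next hnext using h
  refine ⟨Nat.strongRec fun n rec => next n fun i => rec i i.2, fun n => ?_⟩
  beta_reduce
  rw [Nat.strongRec_eq]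
  exact hnext _ _

theorem exists_injective_mem_of_card_le {ι α : Type*} [Fintype ι] [DecidableEq α]
    (t : ι → Finset α) (ht : ∀ i, Fintype.card ι ≤ (t i).card) :
    ∃ f : ι → α, Function.Injective f ∧ ∀ i, f i ∈ t i := by
  refine (all_card_le_biUnion_card_iff_exists_injective t).1 fun s => ?_
  rcases s.eq_empty_or_nonempty with rfl | ⟨i, hi⟩
  · simp
  · calc s.card ≤ Fintype.card ι := card_le_univ s
      _ ≤ (t i).card := ht i
      _ ≤ (s.biUnion t).card := card_le_card (subset_biUnion_of_mem t hi)

theorem Fin.exists_tournament_card_le {N : ℕ} [NeZero N] (m : ℕ) (hN : N ≤ 2 * m + 1) :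
    ∃ T : Fin N → Finset (Fin N), (∀ r, r ∉ T r) ∧ (∀ r, (T r).card ≤ m) ∧
      ∀ r₁ r₂, r₁ ≠ r₂ → r₁ ∈ T r₂ ∨ r₂ ∈ T r₁ := by
  refine ⟨fun r => univ.filter fun r' => (r - r').val ∈ Icc 1 m, ?_, fun r => ?_, ?_⟩
  · simp
  · calc _ ≤ (Icc 1 m).card :=
          card_le_card_of_injOn (fun r' => (r - r').val) (fun r' hr' => (mem_filter.1 hr').2)
            fun r₁ _ r₂ _ h => sub_right_injective (Fin.ext h)
      _ = m := by simp
  · intro r₁ r₂ hne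
    have hx : r₂ - r₁ ≠ 0 := sub_ne_zero.2 hne.symm
    have hpos : 0 < (r₂ - r₁).val := Nat.pos_of_ne_zero (Fin.val_ne_zero_iff.2 hx)
    have hneg : (r₁ - r₂).val = N - (r₂ - r₁).val := by
      rw [← neg_sub, Fin.val_neg, if_neg hx]
    have hlt := (r₂ - r₁).isLt
    simp only [mem_filter, mem_univ, true_and, mem_Icc]
    omega

theorem exists_row_avoiding {α : Type*} [DecidableEq α] (S : ℕ → Finset α) (F : Finset α)
    (m : ℕ) (b : α) (hb : b ∈ S 1 \ F) (hS : ∀ j, 2 ≤ j → F.card + m < (S j).card) :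
    ∃ a : ℕ → α, a 1 = b ∧ (∀ j, 1 ≤ j → a j ∈ S j \ F) ∧
      ∀ i j, 1 ≤ i → i < j → i ≤ m → a i ≠ a j := by
  suffices hnext : ∀ j (p : Fin j → α), ∃ x, (j = 1 → x = b) ∧
      (2 ≤ j → x ∈ S j \ F ∧ ∀ i : Fin j, (i : ℕ) ∈ Icc 1 m → p i ≠ x) by
    obtain ⟨a, ha⟩ := exists_seq_of_forall_exists_next _ hnext
    refine ⟨a, (ha 1).1 rfl, fun j hj => ?_, fun i j hi hij him => ?_⟩
    · obtain rfl | hj := (by omega : j = 1 ∨ 2 ≤ j)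
      · exact (ha 1).1 rfl ▸ hb
      · exact ((ha j).2 hj).1
    · exact ((ha j).2 (by omega)).2 ⟨i, hij⟩ (mem_Icc.2 ⟨hi, him⟩)
  intro j p
  rcases le_or_gt j 1 with hj | hj
  · exact ⟨b, fun _ => rfl, by omega⟩
  let prefixIdx := univ.filter fun i : Fin j => (i : ℕ) ∈ Icc 1 m
  have hprefix : prefixIdx.card ≤ m := by
    calc _ ≤ (Icc 1 m).card :=
          card_le_card_of_injOn Fin.val (fun i hi => (mem_filter.1 hi).2) Fin.val_injective.injOn
      _ = m := by simp
  have hcard : (F ∪ prefixIdx.image p).card < (S j).card := by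
    calc _ ≤ F.card + (prefixIdx.image p).card := card_union_le _ _
      _ ≤ F.card + m := by grw [card_image_le, hprefix]
      _ < (S j).card := hS j hj
  obtain ⟨x, hxS, hx⟩ := exists_mem_notMem_of_card_lt_card hcard
  simp only [mem_union, not_or] at hx
  refine ⟨x, by omega, fun _ => ⟨mem_sdiff.2 ⟨hxS, hx.1⟩, fun i hi hpx => hx.2 ?_⟩⟩
  exact mem_image.2 ⟨i, mem_filter.2 ⟨mem_univ i, hi⟩, hpx⟩

/-- For n ≥ 1 and k = 2n − 1, the grid-filling problem has a general solution. -/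
theorem stmt2 (n : ℕ) (hn : 1 ≤ n)
    (S : Fin (2 * n - 1) → ℕ → Finset ℕ)
    (hS : ∀ i, ∀ j : ℕ, 1 ≤ j → (S i j).card = 2 * n - 1) :
    ∃ a : Fin (2 * n - 1) → ℕ → ℕ,
      (∀ i, ∀ j : ℕ, 1 ≤ j → a i j ∈ S i j) ∧
      (∀ i, ∀ j₁ j₂ : ℕ, 1 ≤ j₁ → j₁ < j₂ → j₂ ≤ n → a i j₁ ≠ a i j₂) ∧
      (∀ i, ∀ j : ℕ, n ≤ j → ∀ j' : ℕ, 1 ≤ j' → j' ≤ n - 1 → a i j ≠ a i j') ∧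
      (∀ r₁ r₂, r₁ ≠ r₂ → ∀ j : ℕ, 1 ≤ j →
        (Finset.Icc 1 j).image (a r₁) ≠ (Finset.Icc 1 j).image (a r₂)) := by
  have : NeZero (2 * n - 1) := ⟨by omega⟩
  obtain ⟨T, hT_irrefl, hT_card, hT_total⟩ :=
    Fin.exists_tournament_card_le (N := 2 * n - 1) (n - 1) (by omega)
  obtain ⟨b, hb_inj, hb_mem⟩ :=
    exists_injective_mem_of_card_le (fun r => S r 1) fun r => by simp [hS r 1 le_rfl]
  have hrow (r) := exists_row_avoiding (S r) ((T r).image b) (n - 1) (b r)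
    (mem_sdiff.2 ⟨hb_mem r, fun h => hT_irrefl r (hb_inj.mem_finset_image.1 h)⟩)
    fun j hj => by grw [card_image_le, hT_card r, hS r j (by omega)]; omega
  choose a ha_one ha_mem ha_distinct using hrow
  refine ⟨a, fun i j hj => (mem_sdiff.1 (ha_mem i j hj)).1,
    fun i j₁ j₂ h₁ h₁₂ h₂ => ha_distinct i j₁ j₂ h₁ h₁₂ (by omega),
    fun i j hj j' h₁ h₂ => (ha_distinct i j' j h₁ (by omega) h₂).symm, ?_⟩
  have separate : ∀ {r r'} {j : ℕ}, 1 ≤ j → r ∈ T r' →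
      (Icc 1 j).image (a r) ≠ (Icc 1 j).image (a r') := by
    intro r r' j hj hr heq
    obtain ⟨i, hi, hai⟩ := mem_image.1 (heq ▸ mem_image_of_mem (a r) (mem_Icc.2 ⟨le_rfl, hj⟩))
    exact (mem_sdiff.1 (ha_mem r' i (mem_Icc.1 hi).1)).2 (hai ▸ ha_one r ▸ mem_image_of_mem b hr)
  intro r₁ r₂ hne j hj
  rcases hT_total r₁ r₂ hne with h | h
  · exact separate hj h
  · exact (separate hj h).symm
end

section
/- Let k = n + 1 and suppose S_{ij} = {1,…,k} for all i ∈ {1,…,k}, j ∈ ℕ. Define a_{ij} = i + j − 1 (mod k, with representatives in {1,…,k}) for 1 ≤ j ≤ n, and a_{ij} = a_{in} for j ≥ n. Then this assignment satisfies conditions (2a), (2b), and (3) of the grid-filling problem. -/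
/-!
Modulo `k = n + 1`, row `i` runs cyclically through `i, i + 1, …, i + n - 1` and then stays put,
so its entries are distinct and the last one does not repeat an earlier one. The first `j`
entries form the cyclic arc of length `m = min j n < k` starting at `i`, and a proper nonempty
arc determines its starting point, so distinct rows have distinct prefix sets.
-/

theorem Nat.eq_of_add_mod_eq_add_mod {k r s t : ℕ} (hs : s < k) (ht : t < k)
    (h : (r + s) % k = (r + t) % k) : s = t :=
  (Nat.ModEq.add_left_cancel' r h).eq_of_lt_of_lt hs ht

def cyclicArc (k r m : ℕ) : Finset ℕ :=
  (Finset.range m).image fun s => (r + s) % k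

theorem mem_cyclicArc {k r m x : ℕ} : x ∈ cyclicArc k r m ↔ ∃ s < m, (r + s) % k = x := by
  simp [cyclicArc]

/-- The start of a proper arc is its only element whose predecessor lies outside the arc. -/
theorem eq_of_cyclicArc_eq {k r₁ r₂ m : ℕ} (hm : 0 < m) (hmk : m < k) (h₁ : r₁ < k)
    (h₂ : r₂ < k) (h : cyclicArc k r₁ m = cyclicArc k r₂ m) : r₁ = r₂ := by
  have hr₁ : r₁ ∈ cyclicArc k r₂ m := h ▸ mem_cyclicArc.2 ⟨0, hm, by simp [Nat.mod_eq_of_lt h₁]⟩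
  obtain ⟨s, hs, hs_eq⟩ := mem_cyclicArc.1 hr₁
  cases s with
  | zero => simpa [Nat.mod_eq_of_lt h₂] using hs_eq.symm
  | succ s =>
    have hpred : (r₂ + s) % k ∈ cyclicArc k r₁ m := h ▸ mem_cyclicArc.2 ⟨s, by omega, rfl⟩
    obtain ⟨t, ht, ht_eq⟩ := mem_cyclicArc.1 hpred
    have hstep : r₁ + (t + 1) ≡ r₁ + 0 [MOD k] :=
      calc r₁ + (t + 1) = r₁ + t + 1 := by ring
        _ ≡ r₂ + s + 1 [MOD k] := Nat.ModEq.add_right 1 ht_eq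
        _ = r₂ + (s + 1) := by ring
        _ ≡ r₁ + 0 [MOD k] := by
          rw [add_zero]; exact hs_eq.trans (Nat.mod_eq_of_lt h₁).symm
    exact absurd (Nat.eq_of_add_mod_eq_add_mod (by omega) (by omega) hstep) (by omega)

def cyclicRow (n i j : ℕ) : ℕ := (i + (min j n - 1)) % (n + 1) + 1

theorem cyclicRow_mem_Icc (n i j : ℕ) : cyclicRow n i j ∈ Finset.Icc 1 (n + 1) := by
  have := Nat.mod_lt (i + (min j n - 1)) (by omega : 0 < n + 1)
  simp only [cyclicRow, Finset.mem_Icc]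
  omega

theorem cyclicRow_injOn {n i j₁ j₂ : ℕ} (h₁ : 1 ≤ j₁) (h₂ : 1 ≤ j₂) (hj₁ : j₁ ≤ n)
    (hj₂ : j₂ ≤ n) (h : cyclicRow n i j₁ = cyclicRow n i j₂) : j₁ = j₂ := by
  have := Nat.eq_of_add_mod_eq_add_mod (by omega) (by omega) (Nat.add_right_cancel h)
  omega

theorem cyclicRow_of_le {n i j : ℕ} (hj : n ≤ j) : cyclicRow n i j = cyclicRow n i n := by
  simp [cyclicRow, min_eq_right hj]

theorem image_cyclicRow {n : ℕ} (hn : 1 ≤ n) (i j : ℕ) :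
    (Finset.Icc 1 j).image (cyclicRow n i) = (cyclicArc (n + 1) i (min j n)).image (· + 1) := by
  ext x
  simp only [Finset.mem_image, Finset.mem_Icc, mem_cyclicArc, cyclicRow]
  constructor
  · rintro ⟨t, ⟨ht₁, htj⟩, rfl⟩
    exact ⟨_, ⟨min t n - 1, by omega, rfl⟩, rfl⟩
  · rintro ⟨_, ⟨s, hs, rfl⟩, rfl⟩
    exact ⟨s + 1, by omega, by rw [min_eq_left (by omega : s + 1 ≤ n)]; rfl⟩

theorem eq_of_image_cyclicRow_eq {n i₁ i₂ j : ℕ} (hn : 1 ≤ n) (hj : 1 ≤ j) (h₁ : i₁ < n + 1)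
    (h₂ : i₂ < n + 1)
    (h : (Finset.Icc 1 j).image (cyclicRow n i₁) = (Finset.Icc 1 j).image (cyclicRow n i₂)) :
    i₁ = i₂ := by
  rw [image_cyclicRow hn, image_cyclicRow hn] at h
  exact eq_of_cyclicArc_eq (by omega) (by omega) h₁ h₂
    (Finset.image_injective (add_left_injective 1) h)

/-- For k = n + 1 and S_{ij} = {1,…,k}, the cyclic assignment
a_{ij} = i + j − 1 (mod k, representatives in {1,…,k}) for 1 ≤ j ≤ n, extended by
a_{ij} = a_{in} for j ≥ n, satisfies (2a), (2b), (3). Row `i : Fin (n+1)` is row `i+1`. -/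
theorem stmt4 (n : ℕ) (hn : 1 ≤ n) (a : Fin (n + 1) → ℕ → ℕ)
    (ha : ∀ i : Fin (n + 1), ∀ j : ℕ, 1 ≤ j → j ≤ n →
      a i j = (i.val + j - 1) % (n + 1) + 1)
    (ha' : ∀ i : Fin (n + 1), ∀ j : ℕ, n ≤ j → a i j = a i n) :
    (∀ i, ∀ j : ℕ, 1 ≤ j → a i j ∈ Finset.Icc 1 (n + 1)) ∧
    (∀ i, ∀ j₁ j₂ : ℕ, 1 ≤ j₁ → j₁ < j₂ → j₂ ≤ n → a i j₁ ≠ a i j₂) ∧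
    (∀ i, ∀ j : ℕ, n ≤ j → ∀ j' : ℕ, 1 ≤ j' → j' ≤ n - 1 → a i j ≠ a i j') ∧
    (∀ r₁ r₂, r₁ ≠ r₂ → ∀ j : ℕ, 1 ≤ j →
      (Finset.Icc 1 j).image (a r₁) ≠ (Finset.Icc 1 j).image (a r₂)) := by
  have ha_le (i : Fin (n + 1)) {j : ℕ} (hj : 1 ≤ j) (hjn : j ≤ n) : a i j = cyclicRow n i j := by
    rw [ha i j hj hjn, cyclicRow, min_eq_left hjn, Nat.add_sub_assoc hj]
  have ha_row (i : Fin (n + 1)) {j : ℕ} (hj : 1 ≤ j) : a i j = cyclicRow n i j := by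
    rcases le_total j n with hjn | hnj
    · exact ha_le i hj hjn
    · rw [ha' i j hnj, ha_le i hn le_rfl, cyclicRow_of_le hnj]
  have h_image (i : Fin (n + 1)) (j : ℕ) :
      (Finset.Icc 1 j).image (a i) = (Finset.Icc 1 j).image (cyclicRow n i) :=
    Finset.image_congr fun t ht => ha_row i (Finset.mem_Icc.1 ht).1
  refine ⟨fun i j hj => ?_, fun i j₁ j₂ hj₁ hj₁₂ hj₂ h => ?_, fun i j hj j' hj'₁ hj'₂ h => ?_,
    fun r₁ r₂ hr j hj h => ?_⟩
  · exact ha_row i hj ▸ cyclicRow_mem_Icc n i j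
  · rw [ha_row i hj₁, ha_row i (by omega)] at h
    exact absurd (cyclicRow_injOn hj₁ (by omega) (by omega) hj₂ h) (by omega)
  · rw [ha_row i (by omega), cyclicRow_of_le hj, ha_row i hj'₁] at h
    exact absurd (cyclicRow_injOn hn hj'₁ le_rfl (by omega) h) (by omega)
  · rw [h_image, h_image] at h
    exact hr (Fin.ext (eq_of_image_cyclicRow_eq hn hj r₁.isLt r₂.isLt h))
end

section
/- Let n ≥ 2, k = 2n − 1, and identify values with residues modulo k. Suppose a_{i1} = i for i = 1,…,k and for j ≥ 2 each a_{ij} avoids the set {i+n, i+n+1, …, i+2n−2} (mod 2n−1). Then for any two distinct rows r₁ ≠ r₂ and any j ∈ ℕ, the prefix sets {a_{r₁1},…,a_{r₁j}} and {a_{r₂1},…,a_{r₂j}} are unequal, because for any distinct r₁, r₂ ∈ ℤ/(2n−1)ℤ, either r₁ ∈ {r₂+n,…,r₂+2n−2} or r₂ ∈ {r₁+n,…,r₁+2n−2} (mod 2n−1). -/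
/-!
Work in `ZMod (2n-1)`. For distinct residues `x ≠ y`, write `d ∈ [1, 2n-2]` for the
representative of `x - y`: if `d ≥ n` then `x` lies in the forbidden block `y + n + [0, n-2]` of
`y`, otherwise `y - x ≡ n + (n-1-d)` puts `y` in the forbidden block of `x`. If `x` lies in the
block of `y`, then row `x` starts with `x`, while row `y` starts with `y ≠ x` and afterwards
avoids its block, so `x` belongs to every prefix set of row `x` but to no prefix set of row `y`.
-/

open Finset

def forbiddenBlock (n : ℕ) (r : ZMod (2 * n - 1)) : Set (ZMod (2 * n - 1)) :=
  {x | ∃ t ≤ n - 2, x = r + n + t}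

theorem mem_forbiddenBlock_or_mem_forbiddenBlock {n : ℕ} (hn : 1 ≤ n) {x y : ZMod (2 * n - 1)}
    (hxy : x ≠ y) : x ∈ forbiddenBlock n y ∨ y ∈ forbiddenBlock n x := by
  have : NeZero (2 * n - 1) := ⟨by omega⟩
  set d := (x - y).val with hd
  have hd_lt : d < 2 * n - 1 := ZMod.val_lt _
  have hd_pos : d ≠ 0 := by rwa [hd, ne_eq, ZMod.val_eq_zero, sub_eq_zero]
  have hd_cast : (d : ZMod (2 * n - 1)) = x - y := ZMod.natCast_zmod_val _
  by_cases hnd : n ≤ d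
  · refine Or.inl ⟨d - n, by omega, ?_⟩
    have : (n : ZMod (2 * n - 1)) + ((d - n : ℕ) : ZMod (2 * n - 1)) = x - y := by
      rw [← Nat.cast_add, Nat.add_sub_cancel' hnd, hd_cast]
    rw [add_assoc, this, add_sub_cancel]
  · refine Or.inr ⟨n - 1 - d, by omega, ?_⟩
    have : (n : ZMod (2 * n - 1)) + ((n - 1 - d : ℕ) : ZMod (2 * n - 1)) = y - x := by
      rw [← Nat.cast_add, show n + (n - 1 - d) = (2 * n - 1) - d by omega,
        Nat.cast_sub hd_lt.le, ZMod.natCast_self, hd_cast, zero_sub, neg_sub]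
    rw [add_assoc, this, add_sub_cancel]

theorem notMem_image_Icc_of_mem_of_forall_notMem {α : Type*} [DecidableEq α] {f : ℕ → α}
    {B : Set α} (hB : ∀ i, 2 ≤ i → f i ∉ B) {s : α} (hs : s ∈ B) (hs₁ : s ≠ f 1) (j : ℕ) :
    s ∉ (Icc 1 j).image f := by
  simp only [mem_image, mem_Icc, not_exists, not_and]
  rintro i ⟨hi₁, -⟩ hi
  rcases hi₁.eq_or_lt with rfl | hi₂
  · exact hs₁ hi.symm
  · exact hB i hi₂ (hi ▸ hs)

/-- k = 2n − 1 construction, values in ℤ/(2n−1)ℤ. Rows are indexed by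
residues; row r starts with r and for j ≥ 2 avoids the block {r+n, …, r+2n−2}.
Then any two distinct rows have unequal prefix sets at every length j. -/
theorem stmt11 (n : ℕ) (hn : 2 ≤ n)
    (a : ZMod (2 * n - 1) → ℕ → ZMod (2 * n - 1))
    (h1 : ∀ r, a r 1 = r)
    (h2 : ∀ r, ∀ j : ℕ, 2 ≤ j → ∀ t : ℕ, t ≤ n - 2 →
      a r j ≠ r + (n : ZMod (2 * n - 1)) + (t : ZMod (2 * n - 1))) :
    ∀ r₁ r₂ : ZMod (2 * n - 1), r₁ ≠ r₂ → ∀ j : ℕ, 1 ≤ j →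
      (Finset.Icc 1 j).image (a r₁) ≠ (Finset.Icc 1 j).image (a r₂) := by
  have separated : ∀ x y, x ≠ y → x ∈ forbiddenBlock n y → ∀ j, 1 ≤ j →
      (Icc 1 j).image (a x) ≠ (Icc 1 j).image (a y) := by
    intro x y hxy hx j hj heq
    have hx_mem : x ∈ (Icc 1 j).image (a x) := mem_image.2 ⟨1, mem_Icc.2 ⟨le_rfl, hj⟩, h1 x⟩
    refine notMem_image_Icc_of_mem_of_forall_notMem (B := forbiddenBlock n y) ?_ hx
      (h1 y ▸ hxy) j (heq ▸ hx_mem)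
    rintro i hi ⟨t, ht, hat⟩
    exact h2 y i hi t ht hat
  intro r₁ r₂ hne j hj
  rcases mem_forbiddenBlock_or_mem_forbiddenBlock (by omega) hne with h | h
  · exact separated r₁ r₂ hne h j hj
  · exact (separated r₂ r₁ hne.symm h j hj).symm
end

section
/- Let k = n + 1 and a_{ij} = ((i + j − 2) mod (n+1)) + 1 for 1 ≤ i ≤ n+1 and 1 ≤ j ≤ n, extended by a_{ij} = a_{in} for j > n. Then for any two distinct rows i₁ ≠ i₂ and any j ∈ ℕ, the prefix sets {a_{i₁1},…,a_{i₁j}} and {a_{i₂1},…,a_{i₂j}} are distinct. -/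
/-!
For `1 ≤ m ≤ n`, the first `m` entries of row `i` form the cyclic run `i, i + 1, …, i + m - 1`
in `ZMod (n + 1)` (shifted into `{1, …, n + 1}`), and from `m = n` on the prefix set no longer
grows. A cyclic run of length `m < n + 1` determines its start: the start is the only element
of the run whose predecessor is not in the run.
-/

open Finset

def cyclicRun (N : ℕ) (x : ZMod N) (m : ℕ) : Finset (ZMod N) :=
  (range m).image fun s : ℕ => x + s

namespace cyclicRun

variable {N m : ℕ}

theorem mem_iff {x y : ZMod N} : y ∈ cyclicRun N x m ↔ ∃ s < m, x + s = y := by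
  simp [cyclicRun]

theorem sub_one_notMem (x : ZMod N) (hm : m < N) : x - 1 ∉ cyclicRun N x m := by
  intro hx
  obtain ⟨s, hs, hxs⟩ := mem_iff.1 hx
  have hzero : ((s + 1 : ℕ) : ZMod N) = 0 := by
    push_cast
    linear_combination hxs
  have := Nat.le_of_dvd s.succ_pos ((ZMod.natCast_eq_zero_iff _ _).1 hzero)
  omega

theorem injective (h0 : 0 < m) (hm : m < N) : Function.Injective (cyclicRun N · m) := by
  intro x y (hxy : cyclicRun N x m = cyclicRun N y m)
  have hy : y ∈ cyclicRun N x m := hxy ▸ mem_iff.2 ⟨0, h0, by simp⟩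
  obtain ⟨s, hs, rfl⟩ := mem_iff.1 hy
  cases s with
  | zero => simp
  | succ s =>
    have hpred : x + ((s + 1 : ℕ) : ZMod N) - 1 ∈ cyclicRun N x m :=
      mem_iff.2 ⟨s, by omega, by push_cast; ring⟩
    rw [hxy] at hpred
    exact absurd hpred (sub_one_notMem _ hm)

end cyclicRun

theorem image_Icc_one_eq_image_min {α : Type*} [DecidableEq α] {f : ℕ → α} {n : ℕ}
    (hn : 1 ≤ n) (hf : ∀ j, n < j → f j = f n) (j : ℕ) :
    (Icc 1 j).image f = (Icc 1 (min j n)).image f := by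
  rcases le_total j n with hj | hj
  · rw [min_eq_left hj]
  rw [min_eq_right hj]
  refine (image_subset_image (Icc_subset_Icc_right hj)).antisymm' fun x hx => ?_
  obtain ⟨t, ht, rfl⟩ := mem_image.1 hx
  rw [mem_Icc] at ht
  rcases le_or_gt t n with htn | htn
  · exact mem_image_of_mem f (mem_Icc.2 ⟨ht.1, htn⟩)
  · exact hf t htn ▸ mem_image_of_mem f (mem_Icc.2 ⟨hn, le_rfl⟩)

theorem image_Icc_one_eq_image_cyclicRun {n m i : ℕ} {f : ℕ → ℕ} (hm : m ≤ n)
    (hf : ∀ j, 1 ≤ j → j ≤ n → f j = (i + j - 1) % (n + 1) + 1) :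
    (Icc 1 m).image f =
      (cyclicRun (n + 1) (i : ZMod (n + 1)) m).image fun x : ZMod (n + 1) => x.val + 1 := by
  have hIcc : Icc 1 m = (range m).image (· + 1) := by
    rw [range_eq_Ico, image_add_right_Ico, zero_add, Ico_add_one_right_eq_Icc]
  rw [hIcc, cyclicRun, image_image, image_image]
  apply image_congr
  intro s hs
  rw [mem_coe, mem_range] at hs
  simp only [Function.comp_apply, hf (s + 1) (by omega) (by omega), ← Nat.cast_add,
    ZMod.val_natCast, ← Nat.add_assoc, Nat.add_sub_cancel]

theorem stmt14_general (n : ℕ) (a : Fin (n + 1) → ℕ → ℕ)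
    (ha : ∀ i : Fin (n + 1), ∀ j : ℕ, 1 ≤ j → j ≤ n →
      a i j = (i.val + j - 1) % (n + 1) + 1)
    (ha' : ∀ i : Fin (n + 1), ∀ j : ℕ, n < j → a i j = a i n) :
    ∀ i₁ i₂ : Fin (n + 1), i₁ ≠ i₂ → ∀ j : ℕ, 1 ≤ j →
      (Finset.Icc 1 j).image (a i₁) ≠ (Finset.Icc 1 j).image (a i₂) := by
  intro i₁ i₂ hne j hj heq
  have hn : 1 ≤ n := by
    by_contra! h
    exact hne (Fin.ext (by omega))
  have hm : min j n ≤ n := min_le_right j n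
  rw [image_Icc_one_eq_image_min hn (ha' i₁) j, image_Icc_one_eq_image_min hn (ha' i₂) j,
    image_Icc_one_eq_image_cyclicRun hm (ha i₁), image_Icc_one_eq_image_cyclicRun hm (ha i₂)]
    at heq
  have hval : Function.Injective fun x : ZMod (n + 1) => x.val + 1 :=
    fun x y h => ZMod.val_injective _ (Nat.succ_injective h)
  have hcast := cyclicRun.injective (le_min hj hn) (by omega) (image_injective hval heq)
  rw [ZMod.natCast_eq_natCast_iff', Nat.mod_eq_of_lt i₁.isLt, Nat.mod_eq_of_lt i₂.isLt] at hcast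
  exact hne (Fin.ext hcast)

/-- The cyclic construction for k = n + 1, a_{ij} = ((i + j − 2) mod (n+1)) + 1
for 1 ≤ j ≤ n and a_{ij} = a_{in} for j > n, satisfies condition (3): distinct rows have
unequal prefix sets at every length. Row `i : Fin (n+1)` is row `i+1`, so
a_{(i+1) j} = ((i.val + j − 1) mod (n+1)) + 1. -/
theorem stmt14 (n : ℕ) (hn : 1 ≤ n) (a : Fin (n + 1) → ℕ → ℕ)
    (ha : ∀ i : Fin (n + 1), ∀ j : ℕ, 1 ≤ j → j ≤ n →
      a i j = (i.val + j - 1) % (n + 1) + 1)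
    (ha' : ∀ i : Fin (n + 1), ∀ j : ℕ, n < j → a i j = a i n) :
    ∀ i₁ i₂ : Fin (n + 1), i₁ ≠ i₂ → ∀ j : ℕ, 1 ≤ j →
      (Finset.Icc 1 j).image (a i₁) ≠ (Finset.Icc 1 j).image (a i₂) :=
  stmt14_general n a ha ha'
end
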